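/- arXiv:2008.10035 — 2 statements merged into one kernel-verified Lean document; each statement's English description precedes it below -/
import Mathlib

section
/- The pure virtual twin group PVT_n is generated by the set {λ_{i,j} : 1 ≤ i < j ≤ n}. In particular, PVT_n has rank n(n−1)/2. -/
/-!
Conjugating by the involution `ρ_k` sends each `λ_{i,j}` to some `λ_{i',j'}` or its inverse, so the
subgroup `Λ` generated by the `λ_{i,j}` is normal; as `s_k = λ_{k,k+1} ρ_k`, `VT_n = Λ · R` with
`R = ⟨ρ_1, …, ρ_{n-1}⟩`. The group `R` has at most `n!` elements, because `⟨ρ_1, …, ρ_m⟩` is covered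
by the `m + 1` cosets `ρ_j ⋯ ρ_m · ⟨ρ_1, …, ρ_{m-1}⟩`; as `π` maps `R` onto `S_n`, it is injective
on `R`, which forces `ker π ≤ Λ`. The `λ_{i,j}` are pairwise distinct: in the action of `VT_n` by
signed permutations in which `s_k` also changes the signs of `k` and `k + 1`, `λ_{i,j}` changes
exactly the signs of `i` and `j`.
-/

namespace VTG

open scoped commutatorElement

abbrev Gen (n : ℕ) := Fin (n-1) ⊕ Fin (n-1)

/-- The free-group letter corresponding to the generator `s_i`. -/
def fs {n : ℕ} (i : Fin (n-1)) : FreeGroup (Gen n) := FreeGroup.of (Sum.inl i)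

/-- The free-group letter corresponding to the generator `ρ_i`. -/
def fr {n : ℕ} (i : Fin (n-1)) : FreeGroup (Gen n) := FreeGroup.of (Sum.inr i)

/-- The defining relations of the virtual twin group `VT_n`. -/
def vtRels (n : ℕ) : Set (FreeGroup (Gen n)) :=
  { w | (∃ i : Fin (n-1), w = fs i * fs i) ∨
        (∃ i j : Fin (n-1), (i : ℕ) + 2 ≤ (j : ℕ) ∧ w = ⁅fs i, fs j⁆) ∨
        (∃ i : Fin (n-1), w = fr i * fr i) ∨
        (∃ i j : Fin (n-1), (i : ℕ) + 2 ≤ (j : ℕ) ∧ w = ⁅fr i, fr j⁆) ∨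
        (∃ i j : Fin (n-1), (j : ℕ) = (i : ℕ) + 1 ∧
          w = fr i * fr j * fr i * (fr j * fr i * fr j)⁻¹) ∨
        (∃ i j : Fin (n-1), (i : ℕ) + 2 ≤ (j : ℕ) ∧ (w = ⁅fr i, fs j⁆ ∨ w = ⁅fs i, fr j⁆)) ∨
        (∃ i j : Fin (n-1), (j : ℕ) = (i : ℕ) + 1 ∧
          w = fr i * fr j * fs i * (fs j * fr i * fr j)⁻¹) }

/-- The virtual twin group `VT_n`. -/
abbrev VT (n : ℕ) := PresentedGroup (vtRels n)

/-- The generator `s_{k+1}` (1-based numbering) of `VT_n`. -/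
def sg {n : ℕ} (k : ℕ) (h : k < n - 1) : VT n := PresentedGroup.of (Sum.inl ⟨k, h⟩)

/-- The generator `ρ_{k+1}` (1-based numbering) of `VT_n`. -/
def rg {n : ℕ} (k : ℕ) (h : k < n - 1) : VT n := PresentedGroup.of (Sum.inr ⟨k, h⟩)

/-- The transposition `(i, i+1)` in the symmetric group on `n` letters. -/
def tr {n : ℕ} (i : Fin (n - 1)) : Equiv.Perm (Fin n) :=
  Equiv.swap ⟨i.1, by have := i.2; omega⟩ ⟨i.1 + 1, by have := i.2; omega⟩

lemma swap_commute {α : Type*} [DecidableEq α] {a b c d : α}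
    (h1 : a ≠ c) (h2 : a ≠ d) (h3 : b ≠ c) (h4 : b ≠ d) :
    Commute (Equiv.swap a b) (Equiv.swap c d) := by
  apply Equiv.Perm.Disjoint.commute
  intro x
  by_cases hxa : x = a
  · subst hxa; right; exact Equiv.swap_apply_of_ne_of_ne h1 h2
  · by_cases hxb : x = b
    · subst hxb; right; exact Equiv.swap_apply_of_ne_of_ne h3 h4
    · left; exact Equiv.swap_apply_of_ne_of_ne hxa hxb

lemma tr_commute {n : ℕ} {i j : Fin (n-1)} (h : (i : ℕ) + 2 ≤ (j : ℕ)) :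
    Commute (tr (n := n) i) (tr j) := by
  apply swap_commute <;>
    (intro hEq; apply_fun Fin.val at hEq; simp only [] at hEq; omega)

lemma tr_braid {n : ℕ} {i j : Fin (n-1)} (h : (j : ℕ) = (i : ℕ) + 1) :
    tr (n := n) i * tr j * tr i = tr j * tr i * tr j := by
  have hj2 : (i : ℕ) + 2 ≤ n := by have := j.2; omega
  set a : Fin n := ⟨i.1, by omega⟩ with ha
  set b : Fin n := ⟨i.1 + 1, by omega⟩ with hb
  set c : Fin n := ⟨i.1 + 2, by omega⟩ with hc
  have hab : a ≠ b := by simp [ha, hb, Fin.ext_iff]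
  have hbc : b ≠ c := by simp [hb, hc, Fin.ext_iff]
  have hac : a ≠ c := by simp [ha, hc, Fin.ext_iff]
  have h1 : tr (n := n) i = Equiv.swap a b := rfl
  have h2 : tr (n := n) j = Equiv.swap b c := by
    unfold tr
    congr 1 <;> exact Fin.ext (by simp [hb, hc, h])
  rw [h1, h2]
  have L := Equiv.swap_mul_swap_mul_swap (x := c) (y := b) (z := a)
    (hbc.symm) (hac.symm)
  have R := Equiv.swap_mul_swap_mul_swap (x := a) (y := b) (z := c)
    (hab) (hac)
  calc Equiv.swap a b * Equiv.swap b c * Equiv.swap a b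
      = Equiv.swap b a * Equiv.swap c b * Equiv.swap b a := by
        rw [Equiv.swap_comm a b, Equiv.swap_comm b c]
    _ = Equiv.swap a c := L
    _ = Equiv.swap c a := Equiv.swap_comm a c
    _ = Equiv.swap b c * Equiv.swap a b * Equiv.swap b c := R.symm

lemma tr_sq {n : ℕ} (i : Fin (n-1)) : tr (n := n) i * tr i = 1 := Equiv.swap_mul_self _ _

/-- The canonical projection `π : VT_n → S_n`. -/
def perm (n : ℕ) : VT n →* Equiv.Perm (Fin n) :=
  PresentedGroup.toGroup (f := Sum.elim tr tr) (by
    rintro w (⟨i, rfl⟩ | ⟨i, j, hij, rfl⟩ | ⟨i, rfl⟩ | ⟨i, j, hij, rfl⟩ |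
      ⟨i, j, hij, rfl⟩ | ⟨i, j, hij, (rfl | rfl)⟩ | ⟨i, j, hij, rfl⟩)
    · simp [fs, tr_sq]
    · rw [map_commutatorElement]
      simp only [fs, FreeGroup.lift_apply_of, Sum.elim_inl]
      exact commutatorElement_eq_one_iff_commute.mpr (tr_commute hij)
    · simp [fr, tr_sq]
    · rw [map_commutatorElement]
      simp only [fr, FreeGroup.lift_apply_of, Sum.elim_inr]
      exact commutatorElement_eq_one_iff_commute.mpr (tr_commute hij)
    · have h1 : FreeGroup.lift (Sum.elim tr tr) (fr i * fr j * fr (n := n) i)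
          = tr i * tr j * tr i := by simp [fr]
      have h2 : FreeGroup.lift (Sum.elim tr tr) (fr j * fr i * fr (n := n) j)
          = tr j * tr i * tr j := by simp [fr]
      rw [map_mul, map_inv, h1, h2, tr_braid hij, mul_inv_cancel]
    · rw [map_commutatorElement]
      simp only [fr, fs, FreeGroup.lift_apply_of, Sum.elim_inl, Sum.elim_inr]
      exact commutatorElement_eq_one_iff_commute.mpr (tr_commute hij)
    · rw [map_commutatorElement]
      simp only [fr, fs, FreeGroup.lift_apply_of, Sum.elim_inl, Sum.elim_inr]
      exact commutatorElement_eq_one_iff_commute.mpr (tr_commute hij)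
    · have h1 : FreeGroup.lift (Sum.elim tr tr) (fr i * fr j * fs (n := n) i)
          = tr i * tr j * tr i := by simp [fr, fs]
      have h2 : FreeGroup.lift (Sum.elim tr tr) (fs j * fr i * fr (n := n) j)
          = tr j * tr i * tr j := by simp [fr, fs]
      rw [map_mul, map_inv, h1, h2, tr_braid hij, mul_inv_cancel])


/-- Vertices `λ_{i,j}`, `1 ≤ i < j ≤ n`, indexed by pairs of `Fin n`. -/
abbrev Vtx (n : ℕ) := {p : Fin n × Fin n // p.1 < p.2}

/-- Two vertices `λ_{i,j}` and `λ_{k,l}` have disjoint index sets, i.e. `i,j,k,l` are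
four distinct integers. -/
abbrev DisjV {n : ℕ} (p q : Vtx n) : Prop :=
  p.1.1 ≠ q.1.1 ∧ p.1.1 ≠ q.1.2 ∧ p.1.2 ≠ q.1.1 ∧ p.1.2 ≠ q.1.2

/-- The right-angled Artin relations for `PVT_n`: the generators `λ_{i,j}` and `λ_{k,l}`
commute whenever `i, j, k, l` are four distinct integers. -/
def raagRels (n : ℕ) : Set (FreeGroup (Vtx n)) :=
  { w | ∃ p q : Vtx n, DisjV p q ∧ w = ⁅FreeGroup.of p, FreeGroup.of q⁆ }

/-- The element `λ_{a+1,b+1} = ρ_{b}⋯ρ_{a+2}(s_{a+1}ρ_{a+1})ρ_{a+2}⋯ρ_{b}` of `VT n`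
(paper indices are 1-based; here `a,b` are 0-based strand indices with `a < b < n`). -/
def lamN {n : ℕ} : ℕ → ℕ → VT n
  | a, b =>
    if h : a < b ∧ b < n then
      if hb : b = a + 1 then sg a (by omega) * rg a (by omega)
      else rg (b - 1) (by omega) * lamN a (b - 1) * rg (b - 1) (by omega)
    else 1
  termination_by a b => b
  decreasing_by omega

/-- The generator `λ_{i,j}` of `PVT_n`, as an element of `VT n`. -/
def lam {n : ℕ} (p : Vtx n) : VT n := lamN p.1.1.1 p.1.2.1

end VTG

lemma Commute.sandwich_comm {G : Type*} [Group G] {x y : G} (h : Commute x y) (z : G) :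
    x * (y * z * y) * x = y * (x * z * x) * y := by
  calc x * (y * z * y) * x = x * y * z * (y * x) := by group
    _ = y * x * z * (x * y) := by rw [h.eq, h.symm.eq]
    _ = y * (x * z * x) * y := by group

lemma Subgroup.mem_normalizer_closure_of_mul_self_eq_one {G : Type*} [Group G] {S : Set G}
    {g : G} (hg : g * g = 1) (hS : ∀ x ∈ S, g * x * g ∈ Subgroup.closure S) :
    g ∈ Subgroup.normalizer (Subgroup.closure S : Set G) := by
  have hinv : g⁻¹ = g := inv_eq_of_mul_eq_one_right hg
  have hconj : Subgroup.closure S ≤ (Subgroup.closure S).comap (MulAut.conj g).toMonoidHom :=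
    (Subgroup.closure_le _).mpr fun y hy => by simpa [hinv] using hS y hy
  refine Subgroup.mem_normalizer_iff.mpr fun x => ⟨fun hx => hconj hx, fun hx => ?_⟩
  have hgg (y : G) : g * (g * y) = y := by rw [← mul_assoc, hg, one_mul]
  simpa [hinv, mul_assoc, hg, hgg] using hconj hx

namespace VTG

open scoped commutatorElement

section Relations

variable {n : ℕ}

-- `ρ_{k+1}` and `s_{k+1}`, extended by `1` to `k ≥ n - 1` so that most relations below hold
-- without bounds.
def rho (k : ℕ) : VT n := if h : k < n - 1 then rg k h else 1

def sig (k : ℕ) : VT n := if h : k < n - 1 then sg k h else 1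

lemma rg_eq_rho {k : ℕ} (h : k < n - 1) : rg k h = rho k := (dif_pos h).symm

lemma sg_eq_sig {k : ℕ} (h : k < n - 1) : sg k h = sig k := (dif_pos h).symm

lemma rho_of_le {k : ℕ} (h : n - 1 ≤ k) : rho (n := n) k = 1 := dif_neg (by omega)

lemma sig_of_le {k : ℕ} (h : n - 1 ≤ k) : sig (n := n) k = 1 := dif_neg (by omega)

lemma rho_mul_self (k : ℕ) : rho (n := n) k * rho k = 1 := by
  unfold rho
  split_ifs with h
  · exact PresentedGroup.one_of_mem (Or.inr (Or.inr (Or.inl ⟨⟨k, h⟩, rfl⟩)))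
  · exact mul_one 1

lemma sig_mul_self (k : ℕ) : sig (n := n) k * sig k = 1 := by
  unfold sig
  split_ifs with h
  · exact PresentedGroup.one_of_mem (Or.inl ⟨⟨k, h⟩, rfl⟩)
  · exact mul_one 1

lemma rho_inv (k : ℕ) : (rho (n := n) k)⁻¹ = rho k :=
  inv_eq_of_mul_eq_one_right (rho_mul_self k)

lemma sig_inv (k : ℕ) : (sig (n := n) k)⁻¹ = sig k :=
  inv_eq_of_mul_eq_one_right (sig_mul_self k)

lemma commute_of_commutatorElement_mem {a b : Gen n}
    (h : ⁅FreeGroup.of a, FreeGroup.of b⁆ ∈ vtRels n) :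
    Commute (PresentedGroup.of a : VT n) (PresentedGroup.of b) := by
  have := PresentedGroup.one_of_mem h
  rw [map_commutatorElement] at this
  exact commutatorElement_eq_one_iff_commute.mp this

lemma commute_rho_rho {k l : ℕ} (h : k + 2 ≤ l ∨ l + 2 ≤ k) :
    Commute (rho (n := n) k) (rho l) := by
  wlog hkl : k + 2 ≤ l generalizing k l
  · exact (this h.symm (h.resolve_left hkl)).symm
  by_cases hl : l < n - 1
  · rw [← rg_eq_rho hl, ← rg_eq_rho (by omega)]
    exact commute_of_commutatorElement_mem
      (Or.inr (Or.inr (Or.inr (Or.inl ⟨⟨k, by omega⟩, ⟨l, hl⟩, hkl, rfl⟩))))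
  · rw [rho_of_le (k := l) (by omega)]
    exact Commute.one_right _

lemma commute_rho_sig {k l : ℕ} (h : k + 2 ≤ l ∨ l + 2 ≤ k) :
    Commute (rho (n := n) k) (sig l) := by
  by_cases hkl : k < n - 1 ∧ l < n - 1
  · rw [← rg_eq_rho hkl.1, ← sg_eq_sig hkl.2]
    rcases h with h | h
    · exact commute_of_commutatorElement_mem
        (Or.inr (Or.inr (Or.inr (Or.inr (Or.inr (Or.inl
          ⟨⟨k, hkl.1⟩, ⟨l, hkl.2⟩, h, Or.inl rfl⟩))))))
    · exact (commute_of_commutatorElement_mem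
        (Or.inr (Or.inr (Or.inr (Or.inr (Or.inr (Or.inl
          ⟨⟨l, hkl.2⟩, ⟨k, hkl.1⟩, h, Or.inr rfl⟩))))))).symm
  · rcases not_and_or.mp hkl with hk | hl
    · rw [rho_of_le (not_lt.mp hk)]; exact Commute.one_left _
    · rw [sig_of_le (not_lt.mp hl)]; exact Commute.one_right _

lemma rho_braid {k : ℕ} (h : k + 2 < n) :
    rho (n := n) k * rho (k + 1) * rho k = rho (k + 1) * rho k * rho (k + 1) := by
  rw [← rg_eq_rho (k := k) (by omega), ← rg_eq_rho (k := k + 1) (by omega)]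
  exact PresentedGroup.mk_eq_mk_of_mul_inv_mem
    (Or.inr (Or.inr (Or.inr (Or.inr (Or.inl ⟨⟨k, by omega⟩, ⟨k + 1, by omega⟩, rfl, rfl⟩)))))

lemma rho_rho_sig {k : ℕ} (h : k + 2 < n) :
    rho (n := n) k * rho (k + 1) * sig k = sig (k + 1) * rho k * rho (k + 1) := by
  rw [← rg_eq_rho (k := k) (by omega), ← rg_eq_rho (k := k + 1) (by omega),
    ← sg_eq_sig (k := k) (by omega), ← sg_eq_sig (k := k + 1) (by omega)]
  exact PresentedGroup.mk_eq_mk_of_mul_inv_mem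
    (Or.inr (Or.inr (Or.inr (Or.inr (Or.inr (Or.inr
      ⟨⟨k, by omega⟩, ⟨k + 1, by omega⟩, rfl, rfl⟩))))))

end Relations

section Lambda

variable {n : ℕ}

lemma rho_mul_mul_rho_of_commute {k : ℕ} {x : VT n} (h : Commute (rho k) x) :
    rho k * x * rho k = x := by
  rw [h.eq, mul_assoc, rho_mul_self, mul_one]

lemma lamN_self_succ {a : ℕ} (h : a + 1 < n) : lamN (n := n) a (a + 1) = sig a * rho a := by
  rw [lamN, dif_pos ⟨by omega, h⟩, dif_pos rfl, sg_eq_sig, rg_eq_rho]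

lemma lamN_succ {a b : ℕ} (hab : a < b) (hb : b + 1 < n) :
    lamN (n := n) a (b + 1) = rho b * lamN a b * rho b := by
  rw [lamN, dif_pos ⟨by omega, hb⟩, dif_neg (by omega)]
  simp only [Nat.add_sub_cancel, rg_eq_rho]

lemma sig_eq_lamN_mul_rho {k : ℕ} (h : k + 1 < n) :
    sig (n := n) k = lamN k (k + 1) * rho k := by
  rw [lamN_self_succ h, mul_assoc, rho_mul_self, mul_one]

lemma perm_sig (k : ℕ) : perm n (sig k) = perm n (rho k) := by
  unfold sig rho
  split_ifs
  · simp only [perm, sg, rg, PresentedGroup.toGroup.of, Sum.elim_inl, Sum.elim_inr]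
  · rfl

lemma perm_lamN (a b : ℕ) : perm n (lamN a b) = 1 := by
  induction a, b using lamN.induct (n := n) with
  | case1 a h => rw [lamN_self_succ h.2, map_mul, perm_sig, ← map_mul, rho_mul_self, map_one]
  | case2 a b h hb ih =>
    obtain ⟨b, rfl⟩ : ∃ c, b = c + 1 := ⟨b - 1, by omega⟩
    simp only [Nat.add_sub_cancel] at ih
    rw [lamN_succ (by omega) h.2, map_mul, map_mul, ih, mul_one,
      ← map_mul, rho_mul_self, map_one]
  | case3 a b h => rw [lamN, dif_neg h, map_one]

lemma commute_rho_lamN {k a b : ℕ} (h : k + 2 ≤ a ∨ b + 1 ≤ k) :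
    Commute (rho (n := n) k) (lamN a b) := by
  induction a, b using lamN.induct (n := n) with
  | case1 a hab =>
    rw [lamN_self_succ hab.2]
    exact (commute_rho_sig (by omega)).mul_right (commute_rho_rho (by omega))
  | case2 a b hab hb ih =>
    obtain ⟨b, rfl⟩ : ∃ c, b = c + 1 := ⟨b - 1, by omega⟩
    simp only [Nat.add_sub_cancel] at ih
    rw [lamN_succ (by omega) hab.2]
    exact ((commute_rho_rho (by omega)).mul_right (ih (by omega))).mul_right
      (commute_rho_rho (by omega))
  | case3 a b hab => rw [lamN, dif_neg hab]; exact Commute.one_right _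

lemma rho_mul_lamN_succ_left_mul_rho {a b : ℕ} (hab : a + 1 < b) (hb : b < n) :
    rho a * lamN (n := n) (a + 1) b * rho a = lamN a b := by
  induction b, hab using Nat.le_induction with
  | base =>
    have hs : sig (n := n) (a + 1) = rho a * rho (a + 1) * sig a * rho (a + 1) * rho a := by
      rw [rho_rho_sig (by omega), mul_assoc _ (rho (a + 1)) (rho (a + 1)), rho_mul_self, mul_one,
        mul_assoc, rho_mul_self, mul_one]
    rw [lamN_self_succ hb, lamN_succ (by omega) hb, lamN_self_succ (by omega), hs]
    calc rho a * (rho a * rho (a + 1) * sig a * rho (a + 1) * rho a * rho (a + 1)) * rho a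
        = (rho a * rho a) * rho (a + 1) * sig a * (rho (a + 1) * rho a * rho (a + 1)) * rho a :=
          by group
      _ = rho (a + 1) * sig a * (rho a * rho (a + 1) * rho a) * rho a := by
          rw [rho_mul_self a, ← rho_braid (by omega), one_mul]
      _ = rho (a + 1) * sig a * rho a * rho (a + 1) * (rho a * rho a) := by group
      _ = rho (a + 1) * (sig a * rho a) * rho (a + 1) := by rw [rho_mul_self]; group
  | succ b hab ih =>
    rw [lamN_succ (by omega) hb, lamN_succ (by omega) hb,
      Commute.sandwich_comm (commute_rho_rho (k := a) (l := b) (by omega)), ih (by omega)]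

lemma rho_mul_lamN_mul_rho_of_lt_of_add_two_le {a k b : ℕ} (hak : a < k) (hkb : k + 2 ≤ b)
    (hb : b < n) : rho k * lamN (n := n) a b * rho k = lamN a b := by
  induction b, hkb using Nat.le_induction with
  | base =>
    have hcomm : Commute (rho (n := n) (k + 1)) (lamN a k) := commute_rho_lamN (by omega)
    rw [lamN_succ (by omega) hb, lamN_succ hak (by omega)]
    calc rho k * (rho (k + 1) * (rho k * lamN a k * rho k) * rho (k + 1)) * rho k
        = (rho k * rho (k + 1) * rho k) * lamN a k * (rho k * rho (k + 1) * rho k) := by group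
      _ = rho (k + 1) * rho k * (rho (k + 1) * lamN a k * rho (k + 1)) * rho k * rho (k + 1) :=
          by rw [rho_braid (by omega)]; group
      _ = rho (k + 1) * (rho k * lamN a k * rho k) * rho (k + 1) := by
          rw [rho_mul_mul_rho_of_commute hcomm]; group
  | succ b hkb ih =>
    rw [lamN_succ (by omega) hb,
      Commute.sandwich_comm (commute_rho_rho (k := k) (l := b) (by omega)), ih (by omega)]

end Lambda

section Normal

variable {n : ℕ}

lemma rho_mul_rho_mul_mul_rho_mul_rho (k : ℕ) (x : VT n) :
    rho k * (rho k * x * rho k) * rho k = x := by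
  calc rho k * (rho k * x * rho k) * rho k = (rho k * rho k) * x * (rho k * rho k) := by group
    _ = x := by rw [rho_mul_self, one_mul, mul_one]

def lamSubgroup (n : ℕ) : Subgroup (VT n) := Subgroup.closure (Set.range (lam (n := n)))

lemma lamN_mem_lamSubgroup {a b : ℕ} (hab : a < b) (hb : b < n) : lamN a b ∈ lamSubgroup n :=
  Subgroup.subset_closure ⟨⟨(⟨a, by omega⟩, ⟨b, hb⟩), hab⟩, rfl⟩

-- `ρ_k λ_{a,b} ρ_k = λ_{τ_k a, τ_k b}`, except that it is `λ_{k,k+1}⁻¹` when `{a, b} = {k, k + 1}`.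
lemma rho_mul_lamN_mul_rho_mem (k : ℕ) {a b : ℕ} (hab : a < b) (hb : b < n) :
    rho k * lamN a b * rho k ∈ lamSubgroup n := by
  by_cases hfar : k + 2 ≤ a ∨ b + 1 ≤ k
  · rw [rho_mul_mul_rho_of_commute (commute_rho_lamN hfar)]
    exact lamN_mem_lamSubgroup hab hb
  by_cases hka : k + 1 = a
  · subst hka
    rw [rho_mul_lamN_succ_left_mul_rho hab hb]
    exact lamN_mem_lamSubgroup (by omega) hb
  by_cases hka' : k = a
  · subst hka'
    by_cases hkb : b = k + 1
    · subst hkb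
      have hinv : rho k * (sig k * rho k) * rho k = (sig (n := n) k * rho k)⁻¹ := by
        rw [mul_inv_rev, rho_inv, sig_inv, mul_assoc, mul_assoc, rho_mul_self, mul_one]
      rw [lamN_self_succ hb, hinv, ← lamN_self_succ hb]
      exact inv_mem (lamN_mem_lamSubgroup hab hb)
    · rw [← rho_mul_lamN_succ_left_mul_rho (a := k) (by omega) hb,
        rho_mul_rho_mul_mul_rho_mul_rho]
      exact lamN_mem_lamSubgroup (by omega) hb
  by_cases hkb : k + 2 ≤ b
  · rw [rho_mul_lamN_mul_rho_of_lt_of_add_two_le (by omega) hkb hb]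
    exact lamN_mem_lamSubgroup hab hb
  by_cases hkb' : k + 1 = b
  · subst hkb'
    rw [lamN_succ (by omega) hb, rho_mul_rho_mul_mul_rho_mul_rho]
    exact lamN_mem_lamSubgroup (by omega) (by omega)
  obtain rfl : k = b := by omega
  by_cases hk : k + 1 < n
  · rw [← lamN_succ hab hk]
    exact lamN_mem_lamSubgroup (by omega) hk
  · rw [rho_of_le (by omega), one_mul, mul_one]
    exact lamN_mem_lamSubgroup hab hb

instance lamSubgroup_normal : (lamSubgroup n).Normal := by
  have hrho (k : ℕ) : rho k ∈ Subgroup.normalizer (lamSubgroup n : Set (VT n)) :=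
    Subgroup.mem_normalizer_closure_of_mul_self_eq_one (rho_mul_self k) <| by
      rintro _ ⟨p, rfl⟩
      exact rho_mul_lamN_mul_rho_mem k p.2 p.1.2.2
  rw [← Subgroup.normalizer_eq_top_iff, eq_top_iff, ← PresentedGroup.closure_range_of,
    Subgroup.closure_le]
  rintro _ ⟨i | i, rfl⟩
  · change sg i.1 i.2 ∈ _
    rw [sg_eq_sig, sig_eq_lamN_mul_rho (by omega)]
    exact mul_mem (Subgroup.le_normalizer (lamN_mem_lamSubgroup (by omega) (by omega))) (hrho _)
  · change rg i.1 i.2 ∈ _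
    rw [rg_eq_rho]
    exact hrho _

end Normal

section Coxeter

open Finset.HasAntidiagonal

variable {n : ℕ}

/-- The copy of `S_m` permuting the first `m` strands. -/
def rhoSubgroup (n m : ℕ) : Subgroup (VT n) := Subgroup.closure (rho '' {k | k + 1 < m})

def rhoRun (j : ℕ) : ℕ → VT n
  | 0 => 1
  | l + 1 => rho j * rhoRun (j + 1) l

lemma rho_mem_rhoSubgroup {k m : ℕ} (h : k + 1 < m) : rho k ∈ rhoSubgroup n m :=
  Subgroup.subset_closure ⟨k, h, rfl⟩

lemma commute_rho_rhoRun {k j : ℕ} (h : k + 2 ≤ j) (l : ℕ) :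
    Commute (rho (n := n) k) (rhoRun j l) := by
  induction l generalizing j with
  | zero => exact Commute.one_right _
  | succ l ih => exact (commute_rho_rho (Or.inl h)).mul_right (ih (by omega))

lemma rho_succ_mul_rhoRun {k j l : ℕ} (hjk : j ≤ k) (hkl : k + 2 ≤ j + l) (hk : k + 2 < n) :
    rho (k + 1) * rhoRun j l = rhoRun (n := n) j l * rho k := by
  induction l generalizing j with
  | zero => omega
  | succ l ih =>
    obtain hjk | rfl := hjk.lt_or_eq
    · rw [rhoRun, ← mul_assoc, (commute_rho_rho (by omega)).eq, mul_assoc,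
        ih (by omega) (by omega), mul_assoc]
    · obtain ⟨l, rfl⟩ : ∃ l', l = l' + 1 := ⟨l - 1, by omega⟩
      have hcomm : Commute (rho (n := n) j) (rhoRun (j + 2) l) := commute_rho_rhoRun le_rfl l
      simp only [rhoRun]
      calc rho (j + 1) * (rho j * (rho (j + 1) * rhoRun (j + 1 + 1) l))
          = (rho (j + 1) * rho j * rho (j + 1)) * rhoRun (j + 2) l := by group
        _ = rho j * rho (j + 1) * (rho j * rhoRun (j + 2) l) := by rw [← rho_braid hk]; group
        _ = rho j * (rho (j + 1) * rhoRun (j + 1 + 1) l) * rho j := by rw [hcomm.eq]; group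

lemma rho_mul_rhoRun_mem {k j l : ℕ} (hk : k < j + l) (hm : j + l < n) :
    ∃ j' l', j' + l' = j + l ∧ ∃ h ∈ rhoSubgroup n (j + l),
      rho k * rhoRun j l = rhoRun j' l' * h := by
  rcases lt_trichotomy (k + 1) j with hkj | hkj | hkj
  · exact ⟨j, l, rfl, rho k, rho_mem_rhoSubgroup (by omega),
      (commute_rho_rhoRun (by omega) l).eq⟩
  · exact ⟨k, l + 1, by omega, 1, one_mem _, by rw [mul_one, rhoRun, hkj]⟩
  obtain rfl | hjk := (Nat.lt_succ_iff.mp hkj).eq_or_lt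
  · obtain ⟨l, rfl⟩ : ∃ l', l = l' + 1 := ⟨l - 1, by omega⟩
    exact ⟨j + 1, l, by omega, 1, one_mem _, by rw [mul_one, rhoRun, ← mul_assoc, rho_mul_self,
      one_mul]⟩
  · obtain ⟨k, rfl⟩ : ∃ k', k = k' + 1 := ⟨k - 1, by omega⟩
    exact ⟨j, l, rfl, rho k, rho_mem_rhoSubgroup (by omega),
      rho_succ_mul_rhoRun (by omega) (by omega) (by omega)⟩

def rhoCosets (n m : ℕ) : Set (VT n) :=
  (fun p : (ℕ × ℕ) × VT n => rhoRun p.1.1 p.1.2 * p.2) ''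
    ((antidiagonal m : Set (ℕ × ℕ)) ×ˢ rhoSubgroup n m)

lemma rho_mul_mem_rhoCosets {k m : ℕ} (hk : k < m) (hm : m < n) {y : VT n}
    (hy : y ∈ rhoCosets n m) : rho k * y ∈ rhoCosets n m := by
  obtain ⟨⟨⟨j, l⟩, h⟩, ⟨hjl, hh⟩, rfl⟩ := hy
  simp only [Finset.mem_coe, mem_antidiagonal] at hjl
  subst hjl
  obtain ⟨j', l', hjl', h', hh', heq⟩ := rho_mul_rhoRun_mem hk hm
  refine ⟨⟨⟨j', l'⟩, h' * h⟩, ⟨mem_antidiagonal.mpr hjl', mul_mem hh' hh⟩, ?_⟩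
  simp only [← mul_assoc, heq]

lemma rhoSubgroup_succ_subset {m : ℕ} (hm : m < n) :
    (rhoSubgroup n (m + 1) : Set (VT n)) ⊆ rhoCosets n m := by
  intro x hx
  induction hx using Subgroup.closure_induction_left with
  | one => exact ⟨⟨⟨m, 0⟩, 1⟩, ⟨mem_antidiagonal.mpr rfl, one_mem _⟩, mul_one _⟩
  | mul_left x hx y _ hy =>
    obtain ⟨k, hk, rfl⟩ := hx
    exact rho_mul_mem_rhoCosets (Nat.lt_of_succ_lt_succ hk) hm hy
  | inv_mul_cancel x hx y _ hy =>
    obtain ⟨k, hk, rfl⟩ := hx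
    rw [rho_inv]
    exact rho_mul_mem_rhoCosets (Nat.lt_of_succ_lt_succ hk) hm hy

lemma rhoSubgroup_finite_ncard_le {m : ℕ} (hm : m ≤ n) :
    (rhoSubgroup n m : Set (VT n)).Finite ∧
      (rhoSubgroup n m : Set (VT n)).ncard ≤ m.factorial := by
  induction m with
  | zero =>
    have : rhoSubgroup n 0 = ⊥ := by simp [rhoSubgroup]
    simp [this]
  | succ m ih =>
    obtain ⟨hfin, hcard⟩ := ih (by omega)
    have hprod : ((antidiagonal m : Set (ℕ × ℕ)) ×ˢ (rhoSubgroup n m : Set (VT n))).Finite :=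
      (Finset.finite_toSet _).prod hfin
    have hsub := rhoSubgroup_succ_subset (n := n) (m := m) (by omega)
    refine ⟨(hprod.image _).subset hsub, ?_⟩
    calc (rhoSubgroup n (m + 1) : Set (VT n)).ncard
        ≤ (rhoCosets n m).ncard := Set.ncard_le_ncard hsub (hprod.image _)
      _ ≤ (m + 1) * (rhoSubgroup n m : Set (VT n)).ncard := by
          refine (Set.ncard_image_le hprod).trans ?_
          rw [Set.ncard_prod, Set.ncard_coe_finset, Finset.Nat.card_antidiagonal]
      _ ≤ (m + 1).factorial := by rw [Nat.factorial_succ]; exact Nat.mul_le_mul_left _ hcard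

end Coxeter

section Kernel

variable {n : ℕ}

lemma perm_rho {k : ℕ} (h : k < n - 1) : perm n (rho k) = tr ⟨k, h⟩ := by
  rw [← rg_eq_rho h]
  exact PresentedGroup.toGroup.of _

lemma map_perm_rhoSubgroup : (rhoSubgroup n n).map (perm n) = ⊤ := by
  rw [rhoSubgroup, MonoidHom.map_closure, eq_top_iff]
  rcases n with _ | m
  · intro x _
    rw [Subsingleton.elim x 1]
    exact one_mem _
  · rw [← Subgroup.closure_eq_top_of_mclosure_eq_top (Equiv.Perm.mclosure_swap_castSucc_succ m)]
    apply Subgroup.closure_mono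
    rintro _ ⟨i, rfl⟩
    exact ⟨rho i, ⟨i, by simp, rfl⟩, perm_rho (n := m + 1) i.2⟩

lemma eq_one_of_mem_rhoSubgroup_of_perm_eq_one {g : VT n} (hg : g ∈ rhoSubgroup n n)
    (hperm : perm n g = 1) : g = 1 := by
  obtain ⟨hfin, hcard⟩ := rhoSubgroup_finite_ncard_le (le_refl n)
  have : Finite (rhoSubgroup n n) := hfin
  have hsurj : Function.Surjective ((perm n).domRestrict (rhoSubgroup n n)) := by
    rw [← MonoidHom.range_eq_top, MonoidHom.domRestrict_range, map_perm_rhoSubgroup]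
  have hinj := (hsurj.bijective_of_nat_card_le ?_).injective
  · exact congrArg Subtype.val (hinj (a₁ := ⟨g, hg⟩) (a₂ := 1) (by simpa using hperm))
  · rw [Nat.card_perm, Nat.card_fin]
    exact (Nat.card_coe_set_eq _).trans_le hcard

lemma lamSubgroup_le_ker : lamSubgroup n ≤ (perm n).ker :=
  (Subgroup.closure_le _).mpr fun _ ⟨_, hp⟩ => hp ▸ perm_lamN _ _

lemma lamSubgroup_sup_rhoSubgroup : lamSubgroup n ⊔ rhoSubgroup n n = ⊤ := by
  rw [eq_top_iff, ← PresentedGroup.closure_range_of, Subgroup.closure_le]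
  rintro _ ⟨i | i, rfl⟩
  · change sg i.1 i.2 ∈ _
    rw [sg_eq_sig, sig_eq_lamN_mul_rho (by omega)]
    exact mul_mem (Subgroup.mem_sup_left (lamN_mem_lamSubgroup (by omega) (by omega)))
      (Subgroup.mem_sup_right (rho_mem_rhoSubgroup (by omega)))
  · change rg i.1 i.2 ∈ _
    rw [rg_eq_rho]
    exact Subgroup.mem_sup_right (rho_mem_rhoSubgroup (by omega))

lemma ker_perm_le_lamSubgroup : (perm n).ker ≤ lamSubgroup n := by
  intro g hg
  obtain ⟨y, hy, z, hz, rfl⟩ :=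
    Subgroup.mem_sup_of_normal_left.mp (lamSubgroup_sup_rhoSubgroup ▸ Subgroup.mem_top g)
  rw [MonoidHom.mem_ker, map_mul, lamSubgroup_le_ker hy, one_mul] at hg
  rwa [eq_one_of_mem_rhoSubgroup_of_perm_eq_one hz hg, mul_one]

end Kernel

section SignedPermutation

variable {n : ℕ}

lemma val_tr (i : Fin (n - 1)) (x : Fin n) :
    (tr i x : ℕ) = if (x : ℕ) = i then (i : ℕ) + 1 else if (x : ℕ) = i + 1 then (i : ℕ) else x := by
  have := i.2
  unfold tr
  split_ifs with h1 h2
  · rw [show x = ⟨i, by omega⟩ from Fin.ext h1, Equiv.swap_apply_left]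
  · rw [show x = ⟨i + 1, by omega⟩ from Fin.ext h2, Equiv.swap_apply_right]
  · rw [Equiv.swap_apply_of_ne_of_ne (fun h => h1 (congrArg Fin.val h))
      (fun h => h2 (congrArg Fin.val h))]

def inPair (i : Fin (n - 1)) (x : Fin n) : Bool := decide ((x : ℕ) = i ∨ (x : ℕ) = i + 1)

lemma inPair_tr_of_far {i j : Fin (n - 1)} (h : (i : ℕ) + 2 ≤ j ∨ (j : ℕ) + 2 ≤ i) (x : Fin n) :
    inPair i (tr j x) = inPair i x := by
  simp only [inPair, val_tr, decide_eq_decide]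
  split_ifs <;> omega

lemma inPair_tr_self (i : Fin (n - 1)) (x : Fin n) : inPair i (tr i x) = inPair i x := by
  simp only [inPair, val_tr, decide_eq_decide]
  split_ifs <;> omega

lemma inPair_tr_tr_of_succ {i j : Fin (n - 1)} (h : (j : ℕ) = i + 1) (x : Fin n) :
    inPair j (tr i (tr j x)) = inPair i x := by
  simp only [inPair, val_tr, decide_eq_decide]
  split_ifs <;> omega

def twistFun (i : Fin (n - 1)) (t : Bool) (p : Fin n × Bool) : Fin n × Bool :=
  (tr i p.1, p.2 ^^ (t && inPair i p.1))

lemma twistFun_involutive (i : Fin (n - 1)) (t : Bool) : Function.Involutive (twistFun i t) := by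
  rintro ⟨x, e⟩
  refine Prod.ext (Equiv.swap_apply_self _ _ _) ?_
  simp only [twistFun, inPair_tr_self, Bool.xor_assoc, Bool.xor_self, Bool.xor_false]

-- `ρ_i` and `s_i` act on signed letters `(x, e)` as `twist i false` and `twist i true`.
def twist (i : Fin (n - 1)) (t : Bool) : Equiv.Perm (Fin n × Bool) :=
  (twistFun_involutive i t).toPerm

lemma twist_apply (i : Fin (n - 1)) (t : Bool) (x : Fin n) (e : Bool) :
    twist i t (x, e) = (tr i x, e ^^ (t && inPair i x)) := rfl

lemma twist_mul_self (i : Fin (n - 1)) (t : Bool) : twist i t * twist i t = 1 :=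
  Equiv.ext (twistFun_involutive i t)

lemma commute_twist {i j : Fin (n - 1)} (h : (i : ℕ) + 2 ≤ j) (t u : Bool) :
    Commute (twist i t) (twist j u) := by
  refine Equiv.ext fun ⟨x, e⟩ => Prod.ext (Equiv.congr_fun (tr_commute h).eq x) ?_
  simp only [Equiv.Perm.mul_apply, twist_apply, inPair_tr_of_far (Or.inl h),
    inPair_tr_of_far (Or.inr h), Bool.xor_right_comm]

lemma twist_braid {i j : Fin (n - 1)} (h : (j : ℕ) = i + 1) (t : Bool) :
    twist i false * twist j false * twist i t = twist j t * twist i false * twist j false := by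
  refine Equiv.ext fun ⟨x, e⟩ => Prod.ext (Equiv.congr_fun (tr_braid h) x) ?_
  simp only [Equiv.Perm.mul_apply, twist_apply, inPair_tr_tr_of_succ h, Bool.false_and,
    Bool.xor_false]

end SignedPermutation

section Injective

variable {n : ℕ}

def signedRep (n : ℕ) : VT n →* Equiv.Perm (Fin n × Bool) :=
  PresentedGroup.toGroup (f := Sum.elim (twist · true) (twist · false)) <| by
    rintro w (⟨i, rfl⟩ | ⟨i, j, hij, rfl⟩ | ⟨i, rfl⟩ | ⟨i, j, hij, rfl⟩ |
      ⟨i, j, hij, rfl⟩ | ⟨i, j, hij, (rfl | rfl)⟩ | ⟨i, j, hij, rfl⟩) <;>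
    simp only [fs, fr, map_mul, map_inv, map_commutatorElement, FreeGroup.lift_apply_of,
      Sum.elim_inl, Sum.elim_inr, twist_mul_self, commutatorElement_eq_one_iff_commute,
      mul_inv_eq_one]
    all_goals first | exact commute_twist hij _ _ | exact twist_braid hij _

lemma signedRep_rho {k : ℕ} (h : k < n - 1) : signedRep n (rho k) = twist ⟨k, h⟩ false := by
  rw [← rg_eq_rho h]
  exact PresentedGroup.toGroup.of _

lemma signedRep_sig {k : ℕ} (h : k < n - 1) : signedRep n (sig k) = twist ⟨k, h⟩ true := by
  rw [← sg_eq_sig h]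
  exact PresentedGroup.toGroup.of _

lemma signedRep_lamN {a b : ℕ} (hab : a < b) (hb : b < n) (x : Fin n) (e : Bool) :
    signedRep n (lamN a b) (x, e) = (x, e ^^ decide ((x : ℕ) = a ∨ (x : ℕ) = b)) := by
  induction b, hab using Nat.le_induction generalizing x e with
  | base =>
    rw [lamN_self_succ hb, map_mul, signedRep_sig (by omega), signedRep_rho (by omega),
      Equiv.Perm.mul_apply, twist_apply, twist_apply, inPair_tr_self]
    exact Prod.ext (Equiv.swap_apply_self _ _ _) (by simp [inPair])
  | succ b hab ih =>
    rw [lamN_succ hab hb, map_mul, map_mul, signedRep_rho (by omega), Equiv.Perm.mul_apply,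
      Equiv.Perm.mul_apply, twist_apply, ih (by omega), twist_apply]
    refine Prod.ext (Equiv.swap_apply_self _ _ _) ?_
    simp only [Bool.false_and, Bool.xor_false, Bool.xor_right_inj, decide_eq_decide, val_tr]
    split_ifs <;> omega

lemma lam_injective : Function.Injective (lam (n := n)) := by
  rintro ⟨⟨a, b⟩, hab⟩ ⟨⟨c, d⟩, hcd⟩ heq
  simp only [Fin.lt_def] at hab hcd
  have hflip (x : Fin n) :
      decide ((x : ℕ) = a ∨ (x : ℕ) = b) = decide ((x : ℕ) = c ∨ (x : ℕ) = d) := by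
    have := congrArg (fun g => (signedRep n g (x, false)).2) heq
    simpa only [lam, signedRep_lamN hab b.2, signedRep_lamN hcd d.2, Bool.false_xor] using this
  have ha := hflip a
  have hb := hflip b
  simp only [decide_eq_decide, true_or, or_true, true_iff] at ha hb
  obtain ⟨rfl, rfl⟩ : a = c ∧ b = d := by simp only [Fin.ext_iff]; omega
  rfl

end Injective

lemma card_vtx (n : ℕ) : Nat.card (Vtx n) = n * (n - 1) / 2 := by
  rw [Nat.card_eq_fintype_card, Fintype.card_subtype, Fintype.card_product_filter_lt,
    Fintype.card_fin, Nat.choose_two_right]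

theorem pvt_generated_by_lam_general (n : ℕ) :
    Subgroup.closure (Set.range (lam (n := n))) = (perm n).ker ∧
      Nat.card (Set.range (lam (n := n))) = n * (n - 1) / 2 :=
  ⟨le_antisymm lamSubgroup_le_ker ker_perm_le_lamSubgroup,
    (Nat.card_range_of_injective lam_injective).trans (card_vtx n)⟩

/-- `PVT_n` is generated by the `λ_{i,j}`, `1 ≤ i < j ≤ n`; in particular this generating
set has `n(n-1)/2` elements. -/
theorem pvt_generated_by_lam (n : ℕ) (hn : 2 ≤ n) :
    Subgroup.closure (Set.range (lam (n := n))) = (perm n).ker ∧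
      Nat.card (Set.range (lam (n := n))) = n * (n - 1) / 2 :=
  pvt_generated_by_lam_general n

end VTG
end

section
/- The pure virtual twin group PVT_3 is isomorphic to the free group F_3 of rank 3. -/
namespace VTG

open scoped commutatorElement

/-!
`VT_3 ≅ F_3 ⋊ S_3`, where `S_3 = ⟨τ₀, τ₁⟩` is given by its Coxeter presentation and acts on the
free group on `y₀, y₁, y₂` by `τ · y_k = (y_{τ k})⁻¹`. The isomorphism sends `ρ_i ↦ τ_i` and
`s_i ↦ y_p τ_i`, where `p` is the point fixed by `τ_i`; its inverse sends `τ_i ↦ ρ_i` and `y_k` to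
the generator `λ` of `PVT_3` joining the two other points. For `n = 3` the far-commutation
relations of `VT_3` are vacuous, and the remaining ones are checked directly. Through the
isomorphism, `π` becomes the projection to `S_3` followed by `S_3 → Perm (Fin 3)`, and the latter
is injective because the Coxeter relations leave at most the six words `1, τ₀, τ₁, τ₀τ₁, τ₁τ₀,
τ₀τ₁τ₀`. So `PVT_3 = ker π` is the free factor `F_3`.
-/

section Relations

variable {n k : ℕ}

@[simp] lemma sg_mul_self (h : k < n - 1) : sg k h * sg k h = 1 :=
  PresentedGroup.one_of_mem (Or.inl ⟨⟨k, h⟩, rfl⟩)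

@[simp] lemma rg_mul_self (h : k < n - 1) : rg k h * rg k h = 1 :=
  PresentedGroup.one_of_mem (Or.inr <| Or.inr <| Or.inl ⟨⟨k, h⟩, rfl⟩)

@[simp] lemma sg_inv (h : k < n - 1) : (sg k h)⁻¹ = sg k h :=
  inv_eq_of_mul_eq_one_right (sg_mul_self h)

@[simp] lemma rg_inv (h : k < n - 1) : (rg k h)⁻¹ = rg k h :=
  inv_eq_of_mul_eq_one_right (rg_mul_self h)

@[simp] lemma rg_mul_rg_mul (h : k < n - 1) (x : VT n) : rg k h * (rg k h * x) = x := by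
  rw [← mul_assoc, rg_mul_self, one_mul]

lemma rg_braid (h₀ : k < n - 1) (h₁ : k + 1 < n - 1) :
    rg k h₀ * rg (k + 1) h₁ * rg k h₀ = rg (k + 1) h₁ * rg k h₀ * rg (k + 1) h₁ :=
  mul_inv_eq_one.mp <| PresentedGroup.one_of_mem
    (Or.inr <| Or.inr <| Or.inr <| Or.inr <| Or.inl ⟨⟨k, h₀⟩, ⟨k + 1, h₁⟩, rfl, rfl⟩)

@[simp] lemma rg_succ_mul_rg_mul_rg_succ_mul (h₀ : k < n - 1) (h₁ : k + 1 < n - 1) (x : VT n) :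
    rg (k + 1) h₁ * (rg k h₀ * (rg (k + 1) h₁ * x)) =
      rg k h₀ * (rg (k + 1) h₁ * (rg k h₀ * x)) := by
  simp only [← mul_assoc, rg_braid]

lemma rg_rg_sg (h₀ : k < n - 1) (h₁ : k + 1 < n - 1) :
    rg k h₀ * rg (k + 1) h₁ * sg k h₀ = sg (k + 1) h₁ * rg k h₀ * rg (k + 1) h₁ :=
  mul_inv_eq_one.mp <| PresentedGroup.one_of_mem
    (Or.inr <| Or.inr <| Or.inr <| Or.inr <| Or.inr <| Or.inr ⟨⟨k, h₀⟩, ⟨k + 1, h₁⟩, rfl, rfl⟩)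

lemma sg_succ_eq (h₀ : k < n - 1) (h₁ : k + 1 < n - 1) :
    sg (k + 1) h₁ = rg k h₀ * rg (k + 1) h₁ * sg k h₀ * rg (k + 1) h₁ * rg k h₀ := by
  rw [rg_rg_sg]
  simp [mul_assoc]

end Relations

namespace VT

variable {n : ℕ} {G : Type*} [Group G]

lemma hom_ext {f g : VT n →* G} (hs : ∀ k h, f (sg k h) = g (sg k h))
    (hr : ∀ k h, f (rg k h) = g (rg k h)) : f = g :=
  PresentedGroup.ext fun
    | .inl i => hs i.1 i.2
    | .inr i => hr i.1 i.2

variable (s r : Fin (n - 1) → G) (hs : ∀ i, s i * s i = 1) (hr : ∀ i, r i * r i = 1)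
  (hss : ∀ i j : Fin (n - 1), (i : ℕ) + 2 ≤ j → Commute (s i) (s j))
  (hrr : ∀ i j : Fin (n - 1), (i : ℕ) + 2 ≤ j → Commute (r i) (r j))
  (hrs : ∀ i j : Fin (n - 1), (i : ℕ) + 2 ≤ j → Commute (r i) (s j) ∧ Commute (s i) (r j))
  (hbraid : ∀ i j : Fin (n - 1), (j : ℕ) = i + 1 → r i * r j * r i = r j * r i * r j)
  (hmixed : ∀ i j : Fin (n - 1), (j : ℕ) = i + 1 → r i * r j * s i = s j * r i * r j)

def lift : VT n →* G :=
  PresentedGroup.toGroup (f := Sum.elim s r) <| by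
    rintro w (⟨i, rfl⟩ | ⟨i, j, hij, rfl⟩ | ⟨i, rfl⟩ | ⟨i, j, hij, rfl⟩ |
      ⟨i, j, hij, rfl⟩ | ⟨i, j, hij, (rfl | rfl)⟩ | ⟨i, j, hij, rfl⟩) <;>
    simp only [fs, fr, map_mul, map_inv, map_commutatorElement, FreeGroup.lift_apply_of,
      Sum.elim_inl, Sum.elim_inr, commutatorElement_eq_one_iff_commute, mul_inv_eq_one]
    exacts [hs i, hss i j hij, hr i, hrr i j hij, hbraid i j hij, (hrs i j hij).1,
      (hrs i j hij).2, hmixed i j hij]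

@[simp] lemma lift_sg {k : ℕ} (h : k < n - 1) :
    lift s r hs hr hss hrr hrs hbraid hmixed (sg k h) = s ⟨k, h⟩ :=
  PresentedGroup.toGroup.of _

@[simp] lemma lift_rg {k : ℕ} (h : k < n - 1) :
    lift s r hs hr hss hrr hrs hbraid hmixed (rg k h) = r ⟨k, h⟩ :=
  PresentedGroup.toGroup.of _

end VT

@[simp] lemma perm_sg {n k : ℕ} (h : k < n - 1) : perm n (sg k h) = tr ⟨k, h⟩ :=
  PresentedGroup.toGroup.of _

@[simp] lemma perm_rg {n k : ℕ} (h : k < n - 1) : perm n (rg k h) = tr ⟨k, h⟩ :=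
  PresentedGroup.toGroup.of _

lemma closure_pair_subset_of_braid {G : Type*} [Group G] {a b : G} (ha : a * a = 1)
    (hb : b * b = 1) (hab : a * b * a = b * a * b) :
    (Subgroup.closure {a, b} : Set G) ⊆ {1, a, b, a * b, b * a, a * b * a} := by
  have hbab : b * (a * b * a) = a * b := by
    rw [hab, ← mul_assoc, ← mul_assoc, hb, one_mul]
  have mul_mem : ∀ x ∈ ({a, b} : Set G), ∀ y ∈ ({1, a, b, a * b, b * a, a * b * a} : Set G),
      x * y ∈ ({1, a, b, a * b, b * a, a * b * a} : Set G) := by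
    rintro x (rfl | rfl) y (rfl | rfl | rfl | rfl | rfl | rfl) <;>
      simp [← mul_assoc, ha, hb, hbab, ← hab]
  have inv_eq : ∀ x ∈ ({a, b} : Set G), x⁻¹ = x := by
    rintro x (rfl | rfl)
    exacts [inv_eq_of_mul_eq_one_right ha, inv_eq_of_mul_eq_one_right hb]
  intro x hx
  induction hx using Subgroup.closure_induction_left with
  | one => simp
  | mul_left x hx y _ hy => exact mul_mem x hx y hy
  | inv_mul_cancel x hx y _ hy => rw [inv_eq x hx]; exact mul_mem x hx y hy

def coxeterRels : Set (FreeGroup (Fin 2)) :=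
  {.of 0 * .of 0, .of 1 * .of 1, .of 0 * .of 1 * .of 0 * (.of 1 * .of 0 * .of 1)⁻¹}

abbrev S3 := PresentedGroup coxeterRels

namespace S3

def τ (i : Fin 2) : S3 := PresentedGroup.of i

@[simp] lemma τ_mul_self (i : Fin 2) : τ i * τ i = 1 := by
  fin_cases i
  exacts [PresentedGroup.one_of_mem (.inl rfl), PresentedGroup.one_of_mem (.inr (.inl rfl))]

@[simp] lemma τ_mul_τ_mul (i : Fin 2) (x : S3) : τ i * (τ i * x) = x := by
  rw [← mul_assoc, τ_mul_self, one_mul]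

lemma τ_braid : τ 0 * τ 1 * τ 0 = τ 1 * τ 0 * τ 1 :=
  mul_inv_eq_one.mp <| PresentedGroup.one_of_mem (.inr (.inr rfl))

lemma closure_τ : Subgroup.closure {τ 0, τ 1} = ⊤ := by
  rw [← PresentedGroup.closure_range_of]
  congr 1
  ext x
  simp [Fin.exists_fin_two, τ, eq_comm]

variable {G : Type*} [Group G]

lemma hom_ext {f g : S3 →* G} (h₀ : f (τ 0) = g (τ 0)) (h₁ : f (τ 1) = g (τ 1)) : f = g :=
  PresentedGroup.ext fun i => by fin_cases i; exacts [h₀, h₁]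

def lift (a b : G) (ha : a * a = 1) (hb : b * b = 1) (hab : a * b * a = b * a * b) : S3 →* G :=
  PresentedGroup.toGroup (f := ![a, b]) <| by
    rintro w (rfl | rfl | rfl) <;>
      simp only [map_mul, map_inv, FreeGroup.lift_apply_of, Matrix.cons_val_zero,
        Matrix.cons_val_one, mul_inv_eq_one]
    exacts [ha, hb, hab]

variable {a b : G} {ha : a * a = 1} {hb : b * b = 1} {hab : a * b * a = b * a * b}

@[simp] lemma lift_τ_zero : lift a b ha hb hab (τ 0) = a := PresentedGroup.toGroup.of _

@[simp] lemma lift_τ_one : lift a b ha hb hab (τ 1) = b := PresentedGroup.toGroup.of _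

def toPerm : S3 →* Equiv.Perm (Fin 3) :=
  lift (tr (n := 3) 0) (tr 1) (tr_sq _) (tr_sq _) (tr_braid rfl)

@[simp] lemma toPerm_τ (i : Fin 2) : toPerm (τ i) = tr i := by
  fin_cases i
  exacts [lift_τ_zero, lift_τ_one]

lemma toPerm_injective : Function.Injective toPerm := by
  refine (injective_iff_map_eq_one _).mpr fun x hx => ?_
  rcases closure_pair_subset_of_braid (τ_mul_self 0) (τ_mul_self 1) τ_braid
    (closure_τ ▸ Subgroup.mem_top x) with rfl | rfl | rfl | rfl | rfl | rfl
  · rfl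
  all_goals simp only [map_mul, toPerm_τ] at hx; exact absurd hx (by decide)

end S3

section InvRelabel

variable {α : Type*}

lemma freeGroup_mulAut_ext {f g : MulAut (FreeGroup α)} (h : ∀ k, f (.of k) = g (.of k)) :
    f = g :=
  MulEquiv.toMonoidHom_injective (FreeGroup.ext_hom _ _ h)

open FreeGroup in
def invRelabel (σ : Equiv.Perm α) : MulAut (FreeGroup α) :=
  MonoidHom.toMulEquiv (lift fun k => (of (σ k))⁻¹) (lift fun k => (of (σ⁻¹ k))⁻¹)
    (ext_hom _ _ fun k => by simp) (ext_hom _ _ fun k => by simp)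

@[simp] lemma invRelabel_of (σ : Equiv.Perm α) (k : α) :
    invRelabel σ (.of k) = (.of (σ k))⁻¹ :=
  rfl

lemma invRelabel_mul_self {σ : Equiv.Perm α} (h : σ * σ = 1) :
    invRelabel σ * invRelabel σ = 1 :=
  freeGroup_mulAut_ext fun k => by simp [← Equiv.Perm.mul_apply, h]

lemma invRelabel_mul_mul (σ τ υ : Equiv.Perm α) :
    invRelabel σ * invRelabel τ * invRelabel υ = invRelabel (σ * τ * υ) :=
  freeGroup_mulAut_ext fun k => by simp

end InvRelabel

def conjAction : S3 →* MulAut (FreeGroup (Fin 3)) :=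
  S3.lift (invRelabel (tr (n := 3) 0)) (invRelabel (tr 1)) (invRelabel_mul_self (tr_sq _))
    (invRelabel_mul_self (tr_sq _)) (by rw [invRelabel_mul_mul, invRelabel_mul_mul, tr_braid rfl])

@[simp] lemma conjAction_τ (i : Fin 2) : conjAction (S3.τ i) = invRelabel (tr i) := by
  fin_cases i
  exacts [S3.lift_τ_zero, S3.lift_τ_one]

lemma conj_compat_of_closure_eq_top {N G H : Type*} [Group N] [Group G] [Group H]
    {φ : G →* MulAut N} {fn : N →* H} {fg : G →* H} {s : Set G} (hs : Subgroup.closure s = ⊤)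
    (h : ∀ g ∈ s, fn.comp (φ g).toMonoidHom = (MulAut.conj (fg g)).toMonoidHom.comp fn)
    (g : G) : fn.comp (φ g).toMonoidHom = (MulAut.conj (fg g)).toMonoidHom.comp fn := by
  let K : Subgroup G :=
    { carrier := {g | ∀ n, fn (φ g n) = fg g * fn n * (fg g)⁻¹}
      one_mem' := by simp
      mul_mem' := fun {a b} ha hb n => by
        rw [map_mul, MulAut.mul_apply, ha, hb]
        simp [mul_assoc]
      inv_mem' := fun {a} ha n => by
        have := ha (φ a⁻¹ n)
        rw [← MulAut.mul_apply, ← map_mul, mul_inv_cancel, map_one, MulAut.one_apply] at this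
        rw [map_inv fg, inv_inv, this]
        simp [mul_assoc] }
  have hK : s ⊆ K := fun g hg n => by simpa using DFunLike.congr_fun (h g hg) n
  have hg : g ∈ K := (Subgroup.closure_le K).mpr hK (hs ▸ Subgroup.mem_top g)
  ext n
  simpa using hg n

noncomputable def kerEquivOfSemidirect {N G H P : Type*} [Group N] [Group G] [Group H] [Group P]
    {φ : H →* MulAut N} (e : G ≃* N ⋊[φ] H) {q : H →* P} (hq : Function.Injective q)
    {p : G →* P} (hp : q.comp (SemidirectProduct.rightHom.comp (e : G →* N ⋊[φ] H)) = p) :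
    p.ker ≃* N :=
  have hker : p.ker = SemidirectProduct.inl.range.map (e.symm : N ⋊[φ] H →* G) := by
    rw [← hp, MonoidHom.ker_comp_of_injective _ _ hq, MonoidHom.ker_comp_mulEquiv,
      SemidirectProduct.range_inl_eq_ker_rightHom]
  (MulEquiv.subgroupCongr hker).trans <| (e.symm.subgroupMap _).symm.trans
    (MonoidHom.ofInjective SemidirectProduct.inl_injective).symm

section VT3

open SemidirectProduct

local notation "s₁" => (sg 0 (by decide) : VT 3)
local notation "s₂" => (sg 1 (by decide) : VT 3)
local notation "ρ₁" => (rg 0 (by decide) : VT 3)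
local notation "ρ₂" => (rg 1 (by decide) : VT 3)

-- `pureGen k` is the paper's `λ_{i,j}` for the two points `i, j ≠ k + 1` in cyclic order:
-- `λ_{2,3}`, `λ_{3,1} = λ_{1,3}⁻¹`, `λ_{1,2}`. A transposition reverses the cyclic order, which is
-- where the inverse in `invRelabel` comes from.
def pureGen : Fin 3 → VT 3 := ![s₂ * ρ₂, ρ₂ * ρ₁ * s₁ * ρ₂, s₁ * ρ₁]

-- `![2, 0] i` is the point fixed by `tr i`, and `s_i = pureGen (![2, 0] i) * ρ_i`.
def toSemidirect : VT 3 →* FreeGroup (Fin 3) ⋊[conjAction] S3 :=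
  VT.lift (fun i => inl (.of (![2, 0] i)) * inr (S3.τ i)) (fun i => inr (S3.τ i))
    (fun i => by fin_cases i <;> ext <;> simp [tr, Equiv.swap_apply_def])
    (fun i => by simp [← map_mul])
    (fun i j h => absurd h (by omega))
    (fun i j h => absurd h (by omega))
    (fun i j h => absurd h (by omega))
    (fun i j h => by
      obtain ⟨rfl, rfl⟩ : i = 0 ∧ j = 1 := by constructor <;> ext <;> simp <;> omega
      simp [← map_mul, S3.τ_braid])
    (fun i j h => by
      obtain ⟨rfl, rfl⟩ : i = 0 ∧ j = 1 := by constructor <;> ext <;> simp <;> omega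
      ext
      · simp [tr]
      · simpa [mul_assoc] using S3.τ_braid)

lemma rg_mul_pureGen_mul_rg (i : Fin 2) (k : Fin 3) :
    rg i i.2 * pureGen k * rg i i.2 = (pureGen (tr i k))⁻¹ := by
  fin_cases i <;> fin_cases k <;>
    simp [pureGen, tr, Equiv.swap_apply_def, mul_assoc, sg_succ_eq (n := 3) (k := 0) (by decide)]

lemma toSemidirect_pureGen (k : Fin 3) : toSemidirect (pureGen k) = inl (.of k) := by
  fin_cases k <;> ext <;> simp [toSemidirect, pureGen, tr, Equiv.swap_apply_def, mul_assoc]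

def ofSemidirect : FreeGroup (Fin 3) ⋊[conjAction] S3 →* VT 3 :=
  SemidirectProduct.lift (FreeGroup.lift pureGen)
    (S3.lift ρ₁ ρ₂ (rg_mul_self _) (rg_mul_self _) (rg_braid _ _)) <|
    conj_compat_of_closure_eq_top S3.closure_τ <| by
      rintro g (rfl | rfl) <;> refine FreeGroup.ext_hom _ _ fun k => ?_
      · simpa using (rg_mul_pureGen_mul_rg 0 k).symm
      · simpa using (rg_mul_pureGen_mul_rg 1 k).symm

lemma ofSemidirect_comp_toSemidirect : ofSemidirect.comp toSemidirect = MonoidHom.id _ := by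
  refine VT.hom_ext (fun k h => ?_) (fun k h => ?_) <;>
    obtain rfl | rfl : k = 0 ∨ k = 1 := by omega
  all_goals simp [toSemidirect, ofSemidirect, pureGen, mul_assoc]

lemma toSemidirect_comp_ofSemidirect : toSemidirect.comp ofSemidirect = MonoidHom.id _ := by
  refine SemidirectProduct.hom_ext (FreeGroup.ext_hom _ _ fun k => ?_) (S3.hom_ext ?_ ?_)
  · simp [ofSemidirect, toSemidirect_pureGen]
  all_goals simp [toSemidirect, ofSemidirect]

end VT3

def equivSemidirect : VT 3 ≃* FreeGroup (Fin 3) ⋊[conjAction] S3 :=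
  toSemidirect.toMulEquiv ofSemidirect ofSemidirect_comp_toSemidirect
    toSemidirect_comp_ofSemidirect

lemma toPerm_comp_equivSemidirect :
    S3.toPerm.comp (SemidirectProduct.rightHom.comp
      (equivSemidirect : VT 3 →* FreeGroup (Fin 3) ⋊[conjAction] S3)) = perm 3 :=
  VT.hom_ext (fun k h => by simp [equivSemidirect, toSemidirect])
    (fun k h => by simp [equivSemidirect, toSemidirect])

/-- The pure virtual twin group `PVT_3` is a free group of rank `3`. -/
theorem pvt3_free : Nonempty ((perm 3).ker ≃* FreeGroup (Fin 3)) :=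
  ⟨kerEquivOfSemidirect equivSemidirect S3.toPerm_injective toPerm_comp_equivSemidirect⟩

end VTG
end
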